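/- Let f, g : ℝ≥0 → ℝ satisfy f(0) = g(0) = 0 and be bounded on every compact interval, and define the one-dimensional Skorohod reflections Γf(t) := f(t) + sup_{s ∈ [0,t]} max(−f(s), 0) and Γg(t) := g(t) + sup_{s ∈ [0,t]} max(−g(s), 0). Then for every t ≥ 0, sup_{s ∈ [0,t]} |Γf(s) − Γg(s)| ≤ 2 sup_{s ∈ [0,t]} |f(s) − g(s)|. -/

import Mathlib

open Real Set NNReal

noncomputable section

/-- The one-dimensional Skorohod reflection of a path `f` with `f 0 = 0`:
`(Γ f) t = f t + sup_{s ∈ [0, t]} max (-f s) 0`. -/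
def skorohodReflection (f : ℝ≥0 → ℝ) (t : ℝ≥0) : ℝ :=
  f t + sSup ((fun s => max (-f s) 0) '' Set.Icc 0 t)

/-! The reflection adds to `f` the running supremum of `max (-f) 0`. Since `x ↦ max (-x) 0` is
`1`-Lipschitz and suprema over a common set differ by at most the uniform distance of the
functions, both summands of `Γ f - Γ g` are bounded by `sup |f - g|`, whence the factor `2`. -/

section Supremum

variable {α : Type*} {S : Set α} {φ ψ : α → ℝ} {M : ℝ}

theorem sSup_image_le_sSup_image_add (hS : S.Nonempty) (hψ : BddAbove (ψ '' S))
    (h : ∀ a ∈ S, φ a ≤ ψ a + M) : sSup (φ '' S) ≤ sSup (ψ '' S) + M := by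
  refine csSup_le (hS.image φ) ?_
  rintro _ ⟨a, ha, rfl⟩
  exact (h a ha).trans (add_le_add_left (le_csSup hψ (mem_image_of_mem ψ ha)) M)

theorem abs_sSup_image_sub_sSup_image_le (hS : S.Nonempty) (hφ : BddAbove (φ '' S))
    (hψ : BddAbove (ψ '' S)) (h : ∀ a ∈ S, |φ a - ψ a| ≤ M) :
    |sSup (φ '' S) - sSup (ψ '' S)| ≤ M := by
  refine abs_sub_le_iff.2 ⟨sub_le_iff_le_add'.2 ?_, sub_le_iff_le_add'.2 ?_⟩
  · exact sSup_image_le_sSup_image_add hS hψ fun a ha =>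
      sub_le_iff_le_add'.1 (abs_sub_le_iff.1 (h a ha)).1
  · exact sSup_image_le_sSup_image_add hS hφ fun a ha =>
      sub_le_iff_le_add'.1 (abs_sub_le_iff.1 (h a ha)).2

theorem bddAbove_image_max_neg_zero {C : ℝ} (h : ∀ a ∈ S, |φ a| ≤ C) :
    BddAbove ((fun a => max (-φ a) 0) '' S) := by
  refine ⟨C, ?_⟩
  rintro _ ⟨a, ha, rfl⟩
  exact max_le ((neg_le_abs _).trans (h a ha)) ((abs_nonneg _).trans (h a ha))

theorem bddAbove_image_abs_sub {Cφ Cψ : ℝ} (hφ : ∀ a ∈ S, |φ a| ≤ Cφ)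
    (hψ : ∀ a ∈ S, |ψ a| ≤ Cψ) : BddAbove ((fun a => |φ a - ψ a|) '' S) := by
  refine ⟨Cφ + Cψ, ?_⟩
  rintro _ ⟨a, ha, rfl⟩
  exact (abs_sub (φ a) (ψ a)).trans (add_le_add (hφ a ha) (hψ a ha))

end Supremum

theorem abs_skorohodReflection_sub_le {f g : ℝ≥0 → ℝ} {t : ℝ≥0} {M : ℝ}
    (hf : BddAbove ((fun s => max (-f s) 0) '' Icc 0 t))
    (hg : BddAbove ((fun s => max (-g s) 0) '' Icc 0 t))
    (h : ∀ s ∈ Icc 0 t, |f s - g s| ≤ M) :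
    |skorohodReflection f t - skorohodReflection g t| ≤ 2 * M := by
  have hsup : |sSup ((fun s => max (-f s) 0) '' Icc 0 t) -
      sSup ((fun s => max (-g s) 0) '' Icc 0 t)| ≤ M := by
    refine abs_sSup_image_sub_sSup_image_le (nonempty_Icc.2 zero_le) hf hg fun s hs => ?_
    calc |max (-f s) 0 - max (-g s) 0| ≤ |-f s - -g s| := abs_max_sub_max_le_abs _ _ _
      _ = |f s - g s| := by rw [neg_sub_neg, abs_sub_comm]
      _ ≤ M := h s hs
  unfold skorohodReflection
  calc _ = |(f t - g t) + (sSup ((fun s => max (-f s) 0) '' Icc 0 t)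
          - sSup ((fun s => max (-g s) 0) '' Icc 0 t))| := by rw [add_sub_add_comm]
    _ ≤ |f t - g t| + _ := abs_add_le _ _
    _ ≤ M + M := add_le_add (h t ⟨zero_le, le_rfl⟩) hsup
    _ = 2 * M := (two_mul M).symm

theorem skorohodReflection_lipschitz_general
    (f g : ℝ≥0 → ℝ)
    (hfb : ∀ T : ℝ≥0, ∃ C : ℝ, ∀ s ≤ T, |f s| ≤ C)
    (hgb : ∀ T : ℝ≥0, ∃ C : ℝ, ∀ s ≤ T, |g s| ≤ C) :
    ∀ t : ℝ≥0,
      sSup ((fun s => |skorohodReflection f s - skorohodReflection g s|) '' Set.Icc 0 t) ≤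
        2 * sSup ((fun s => |f s - g s|) '' Set.Icc 0 t) := by
  intro t
  obtain ⟨Cf, hCf⟩ := hfb t
  obtain ⟨Cg, hCg⟩ := hgb t
  have hbdd : BddAbove ((fun s => |f s - g s|) '' Icc 0 t) :=
    bddAbove_image_abs_sub (fun s hs => hCf s hs.2) (fun s hs => hCg s hs.2)
  refine csSup_le ((nonempty_Icc.2 zero_le).image _) ?_
  rintro _ ⟨s, hs, rfl⟩
  exact abs_skorohodReflection_sub_le
    (bddAbove_image_max_neg_zero fun u hu => hCf u (hu.2.trans hs.2))
    (bddAbove_image_max_neg_zero fun u hu => hCg u (hu.2.trans hs.2))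
    fun u hu => le_csSup hbdd (mem_image_of_mem _ ⟨hu.1, hu.2.trans hs.2⟩)

/-- Lipschitz continuity of the one-dimensional Skorohod reflection map:
for paths `f, g` with `f 0 = g 0 = 0` that are bounded on compacts,
`sup_{s ∈ [0,t]} |Γ f s - Γ g s| ≤ 2 sup_{s ∈ [0,t]} |f s - g s|` for every `t ≥ 0`. -/
theorem skorohodReflection_lipschitz
    (f g : ℝ≥0 → ℝ) (hf0 : f 0 = 0) (hg0 : g 0 = 0)
    (hfb : ∀ T : ℝ≥0, ∃ C : ℝ, ∀ s ≤ T, |f s| ≤ C)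
    (hgb : ∀ T : ℝ≥0, ∃ C : ℝ, ∀ s ≤ T, |g s| ≤ C) :
    ∀ t : ℝ≥0,
      sSup ((fun s => |skorohodReflection f s - skorohodReflection g s|) '' Set.Icc 0 t) ≤
        2 * sSup ((fun s => |f s - g s|) '' Set.Icc 0 t) :=
  skorohodReflection_lipschitz_general f g hfb hgb
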